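/- arXiv:2511.10336 — 5 statements merged into one kernel-verified Lean document; each statement's English description precedes it below -/
import Mathlib

section
/- Let ρ₁₂, ρ₁₃, ρ₂₃ be nonzero reals with ρ₁₂ρ₁₃ρ₂₃ > 0, and suppose there is a permutation (i,j,k) of (1,2,3) such that |ρ_{jk}| < |ρ_{ij}ρ_{ik}|/(|ρ_{ij}| + |ρ_{ik}|). Then the quantity (ρ₁₂ρ₁₃/ρ₂₃)² + (ρ₁₂ρ₂₃/ρ₁₃)² + (ρ₁₃ρ₂₃/ρ₁₂)² − 2ρ₁₂² − 2ρ₁₃² − 2ρ₂₃² appearing in the normalizing constant c₂ is strictly positive. -/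
lemma key_c2 (a b c : ℝ) (ha : 0 < a) (hb : 0 < b) (hc : 0 < c)
    (h : c < a * b / (a + b)) :
    0 < (a * b / c) ^ 2 + (a * c / b) ^ 2 + (b * c / a) ^ 2
        - 2 * a ^ 2 - 2 * b ^ 2 - 2 * c ^ 2 := by
  have hab : 0 < a + b := by linarith
  have h' : c * (a + b) < a * b := by rwa [lt_div_iff₀ hab] at h
  have h1 : c * a < a * b := by nlinarith
  have h2 : c * b < a * b := by nlinarith
  have e : (a * b / c) ^ 2 + (a * c / b) ^ 2 + (b * c / a) ^ 2
        - 2 * a ^ 2 - 2 * b ^ 2 - 2 * c ^ 2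
      = ((a*b + b*c + c*a) * (a*b + b*c - c*a) * (a*b + c*a - b*c) *
          (a*b - b*c - c*a)) / (a*b*c)^2 := by
    field_simp
    ring
  rw [e]
  apply div_pos
  · apply mul_pos
    apply mul_pos
    apply mul_pos
    · nlinarith
    · nlinarith
    · nlinarith
    · nlinarith
  · positivity

theorem c2_radicand_pos (ρ12 ρ13 ρ23 : ℝ)
    (h12 : ρ12 ≠ 0) (h13 : ρ13 ≠ 0) (h23 : ρ23 ≠ 0)
    (hprod : ρ12 * ρ13 * ρ23 > 0)
    (hperm : |ρ23| < |ρ12 * ρ13| / (|ρ12| + |ρ13|) ∨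
             |ρ13| < |ρ12 * ρ23| / (|ρ12| + |ρ23|) ∨
             |ρ12| < |ρ13 * ρ23| / (|ρ13| + |ρ23|)) :
    0 < (ρ12 * ρ13 / ρ23) ^ 2 + (ρ12 * ρ23 / ρ13) ^ 2 + (ρ13 * ρ23 / ρ12) ^ 2
        - 2 * ρ12 ^ 2 - 2 * ρ13 ^ 2 - 2 * ρ23 ^ 2 := by
  set a := |ρ12| with haa
  set b := |ρ13| with hbb
  set c := |ρ23| with hcc
  have ha : 0 < a := abs_pos.mpr h12
  have hb : 0 < b := abs_pos.mpr h13
  have hc : 0 < c := abs_pos.mpr h23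
  have eg : (ρ12 * ρ13 / ρ23) ^ 2 + (ρ12 * ρ23 / ρ13) ^ 2 + (ρ13 * ρ23 / ρ12) ^ 2
        - 2 * ρ12 ^ 2 - 2 * ρ13 ^ 2 - 2 * ρ23 ^ 2
      = (a * b / c) ^ 2 + (a * c / b) ^ 2 + (b * c / a) ^ 2
        - 2 * a ^ 2 - 2 * b ^ 2 - 2 * c ^ 2 := by
    rw [← sq_abs (ρ12 * ρ13 / ρ23), ← sq_abs (ρ12 * ρ23 / ρ13),
        ← sq_abs (ρ13 * ρ23 / ρ12), abs_div, abs_div, abs_div,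
        abs_mul, abs_mul, abs_mul, ← sq_abs ρ12, ← sq_abs ρ13, ← sq_abs ρ23]
  rw [eg]
  rcases hperm with h | h | h
  · rw [abs_mul] at h
    exact key_c2 a b c ha hb hc h
  · rw [abs_mul] at h
    have := key_c2 a c b ha hc hb h
    ring_nf at this ⊢
    linarith
  · rw [abs_mul] at h
    have := key_c2 b c a hb hc ha h
    ring_nf at this ⊢
    linarith
end

section
/- Let ρ₁₂, ρ₁₃, ρ₂₃ be nonzero reals with ρ₁₂ρ₁₃ρ₂₃ > 0 and suppose there is a permutation (i,j,k) of (1,2,3) with |ρ_{jk}| < |ρ_{ij}ρ_{ik}|/(|ρ_{ij}| + |ρ_{ik}|). Then for all u₁, u₂, u₃ ∈ [0, 2π), c₁ + 2(ρ₁₂cos(u₁−u₂) + ρ₁₃cos(u₁−u₃) + ρ₂₃cos(u₂−u₃)) > 0, where c₁ = ρ₁₂ρ₁₃/ρ₂₃ + ρ₁₂ρ₂₃/ρ₁₃ + ρ₁₃ρ₂₃/ρ₁₂. In particular the TWCC density is well-defined and strictly positive. -/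
open Real

private lemma twcc_aux (α β γ u1 u2 u3 : ℝ) (h : |β| + |γ| < |α|) :
    0 < α^2 + β^2 + γ^2 +
      2*(α*β*Real.cos (u1-u2) + α*γ*Real.cos (u1-u3) + β*γ*Real.cos (u2-u3)) := by
  set z : ℂ := α * Complex.exp (u1*Complex.I) + β * Complex.exp (u2*Complex.I)
      + γ * Complex.exp (u3*Complex.I) with hzdef
  have e1 : ‖(α:ℂ) * Complex.exp (u1*Complex.I)‖ = |α| := by
    simp [Complex.norm_exp_ofReal_mul_I, Complex.norm_real]
  have e2 : ‖(β:ℂ) * Complex.exp (u2*Complex.I)‖ = |β| := by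
    simp [Complex.norm_exp_ofReal_mul_I, Complex.norm_real]
  have e3 : ‖(γ:ℂ) * Complex.exp (u3*Complex.I)‖ = |γ| := by
    simp [Complex.norm_exp_ofReal_mul_I, Complex.norm_real]
  have hz : 0 < ‖z‖ := by
    have htri : ‖(β:ℂ) * Complex.exp (u2*Complex.I) + γ * Complex.exp (u3*Complex.I)‖
        ≤ |β| + |γ| := by
      calc _ ≤ _ := norm_add_le _ _
        _ = |β| + |γ| := by rw [e2, e3]
    have h2 : |α| ≤ ‖z‖ + (|β| + |γ|) := by
      have key : (α:ℂ) * Complex.exp (u1*Complex.I)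
          = z - ((β:ℂ) * Complex.exp (u2*Complex.I) + γ * Complex.exp (u3*Complex.I)) := by
        rw [hzdef]; ring
      rw [← e1, key]
      calc ‖z - ((β:ℂ) * Complex.exp (u2*Complex.I) + γ * Complex.exp (u3*Complex.I))‖
          ≤ ‖z‖ + ‖(β:ℂ) * Complex.exp (u2*Complex.I) + γ * Complex.exp (u3*Complex.I)‖ := by
            have h := norm_add_le z (-((β:ℂ) * Complex.exp (u2*Complex.I) + γ * Complex.exp (u3*Complex.I)))
            rw [norm_neg] at h
            simpa [sub_eq_add_neg] using h
        _ ≤ _ := by linarith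
    linarith
  have hsq : 0 < Complex.normSq z := by
    rw [← Complex.sq_norm]; positivity
  have heq : Complex.normSq z = α^2 + β^2 + γ^2 +
      2*(α*β*Real.cos (u1-u2) + α*γ*Real.cos (u1-u3) + β*γ*Real.cos (u2-u3)) := by
    simp only [hzdef, Complex.normSq_apply, Complex.add_re, Complex.add_im, Complex.mul_re,
      Complex.mul_im, Complex.ofReal_re, Complex.ofReal_im, Complex.exp_ofReal_mul_I_re,
      Complex.exp_ofReal_mul_I_im, Real.cos_sub]
    have s1 := Real.sin_sq_add_cos_sq u1
    have s2 := Real.sin_sq_add_cos_sq u2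
    have s3 := Real.sin_sq_add_cos_sq u3
    ring_nf
    nlinarith [s1, s2, s3, sq_nonneg α, sq_nonneg β, sq_nonneg γ]
  linarith [heq ▸ hsq]

private lemma twcc_core (p q r x y z : ℝ) (hp : p ≠ 0) (hq : q ≠ 0) (hr : r ≠ 0)
    (hprod : p*q*r > 0) (htri : |r| < |p*q|/(|p|+|q|)) :
    0 < (p*q/r + p*r/q + q*r/p) +
      2*(p*Real.cos (x-y) + q*Real.cos (x-z) + r*Real.cos (y-z)) := by
  set rs := Real.sqrt (p*q*r) with hrsdef
  have hs : 0 < rs := Real.sqrt_pos.mpr hprod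
  have hm : rs * rs = p*q*r := Real.mul_self_sqrt hprod.le
  have hm2 : rs^2 = p*q*r := by rw [sq]; exact hm
  have hd : 0 < |p| + |q| := add_pos (abs_pos.mpr hp) (abs_pos.mpr hq)
  rw [lt_div_iff₀ hd] at htri
  have hnum : |p*r| + |q*r| < |p*q| := by
    rw [abs_mul, abs_mul, abs_mul]
    rw [abs_mul] at htri
    nlinarith
  have htri2 : |p*r/rs| + |q*r/rs| < |p*q/rs| := by
    rw [abs_div, abs_div, abs_div, abs_of_pos hs, ← add_div, div_lt_div_iff₀ hs hs]
    nlinarith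
  have key := twcc_aux (p*q/rs) (p*r/rs) (q*r/rs) x y z htri2
  have heq : (p*q/rs)^2 + (p*r/rs)^2 + (q*r/rs)^2 +
      2*((p*q/rs)*(p*r/rs)*Real.cos (x-y) + (p*q/rs)*(q*r/rs)*Real.cos (x-z)
        + (p*r/rs)*(q*r/rs)*Real.cos (y-z))
      = (p*q/r + p*r/q + q*r/p) +
        2*(p*Real.cos (x-y) + q*Real.cos (x-z) + r*Real.cos (y-z)) := by
    simp only [div_pow, div_mul_div_comm, hm2, hm]
    field_simp
  linarith [heq ▸ key]

theorem twcc_denominator_pos (ρ12 ρ13 ρ23 : ℝ)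
    (h12 : ρ12 ≠ 0) (h13 : ρ13 ≠ 0) (h23 : ρ23 ≠ 0)
    (hprod : ρ12 * ρ13 * ρ23 > 0)
    (hperm : |ρ23| < |ρ12 * ρ13| / (|ρ12| + |ρ13|) ∨
             |ρ13| < |ρ12 * ρ23| / (|ρ12| + |ρ23|) ∨
             |ρ12| < |ρ13 * ρ23| / (|ρ13| + |ρ23|))
    (u1 u2 u3 : ℝ) (hu1 : u1 ∈ Set.Ico 0 (2 * π)) (hu2 : u2 ∈ Set.Ico 0 (2 * π))
    (hu3 : u3 ∈ Set.Ico 0 (2 * π)) :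
    0 < (ρ12 * ρ13 / ρ23 + ρ12 * ρ23 / ρ13 + ρ13 * ρ23 / ρ12) +
        2 * (ρ12 * cos (u1 - u2) + ρ13 * cos (u1 - u3) + ρ23 * cos (u2 - u3)) := by
  have hc : ∀ a b : ℝ, Real.cos (a - b) = Real.cos (b - a) := by
    intro a b; rw [← Real.cos_neg, neg_sub]
  rcases hperm with h | h | h
  · exact twcc_core ρ12 ρ13 ρ23 u1 u2 u3 h12 h13 h23 hprod h
  · have hprod' : ρ12 * ρ23 * ρ13 > 0 := by
      rw [show ρ12 * ρ23 * ρ13 = ρ12 * ρ13 * ρ23 by ring]; exact hprod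
    have key := twcc_core ρ12 ρ23 ρ13 u2 u1 u3 h12 h23 h13 hprod' h
    refine lt_of_lt_of_eq key ?_
    rw [hc u2 u1]; ring
  · have hprod' : ρ23 * ρ13 * ρ12 > 0 := by
      rw [show ρ23 * ρ13 * ρ12 = ρ12 * ρ13 * ρ23 by ring]; exact hprod
    have h' : |ρ12| < |ρ23 * ρ13| / (|ρ23| + |ρ13|) := by
      rw [mul_comm ρ23 ρ13, add_comm |ρ23| |ρ13|]; exact h
    have key := twcc_core ρ23 ρ13 ρ12 u3 u2 u1 h23 h13 h12 hprod' h'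
    refine lt_of_lt_of_eq key ?_
    rw [hc u3 u2, hc u3 u1, hc u2 u1]; ring
end

section
/- The univariate marginal of the TWCM density f(θ;ρ) = (2π)³c₂[c₁ + 2Σ_{i<j}ρ_{ij}cos(2π(Fᵢ(θᵢ)−Fⱼ(θⱼ)))]⁻¹·∏ₖ fₖ(θₖ) in its i-th coordinate is fᵢ: integrating out the other two variables yields fᵢ(θᵢ). -/
open Real MeasureTheory Set Filter


lemma aux_W (a b : ℝ) (hb : |b| < a) :
    ∫ x in (-π)..π, (a + b * Real.cos x)⁻¹ = 2 * π / Real.sqrt (a ^ 2 - b ^ 2) := by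
  have hab1 : 0 < a - b := by cases abs_lt.mp hb; linarith
  have hab2 : 0 < a + b := by cases abs_lt.mp hb; linarith
  have ha : 0 < a := by nlinarith [abs_nonneg b]
  have himg : (fun t : ℝ => 2 * arctan t) '' univ = Ioo (-π) π := by
    rw [image_univ]
    have h2 : range (fun t : ℝ => 2 * arctan t) = (fun y : ℝ => 2 * y) '' range arctan := by
      rw [← range_comp]; rfl
    rw [h2, Real.range_arctan, image_mul_left_Ioo (by norm_num : (0:ℝ) < 2)]
    congr 1 <;> ring
  have hderiv : ∀ t ∈ (univ : Set ℝ), HasDerivWithinAt (fun t : ℝ => 2 * arctan t)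
      (2 * (1 + t ^ 2)⁻¹) univ t := by
    intro t _
    have h := (Real.hasDerivAt_arctan t).const_mul 2
    rw [one_div] at h
    exact h.hasDerivWithinAt
  have hinj : InjOn (fun t : ℝ => 2 * arctan t) univ := by
    intro s _ t _ h
    exact Real.arctan_injective (by dsimp at h; linarith)
  have hcv := integral_image_eq_integral_abs_deriv_smul MeasurableSet.univ hderiv hinj
      (fun x => (a + b * Real.cos x)⁻¹)
  rw [himg] at hcv
  have hIoo : ∫ x in Ioo (-π) π, (a + b * Real.cos x)⁻¹
      = ∫ x in (-π)..π, (a + b * Real.cos x)⁻¹ := by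
    rw [intervalIntegral.integral_of_le (by linarith [Real.pi_pos] : -π ≤ π),
      MeasureTheory.integral_Ioc_eq_integral_Ioo]
  rw [← hIoo, hcv]
  -- now compute ∫ t over ℝ
  have hpt : ∀ t : ℝ, |2 * (1 + t ^ 2)⁻¹| • (a + b * Real.cos (2 * arctan t))⁻¹
      = 2 * ((a + b) + (a - b) * t ^ 2)⁻¹ := by
    intro t
    have h1 : (0:ℝ) < 1 + t ^ 2 := by positivity
    have hcos : Real.cos (2 * arctan t) = (1 - t ^ 2) / (1 + t ^ 2) := by
      rw [Real.cos_two_mul, Real.cos_sq_arctan]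
      field_simp
      ring
    have hdpos : (0:ℝ) < (a + b) + (a - b) * t ^ 2 := by nlinarith
    rw [hcos, abs_of_pos (by positivity), smul_eq_mul]
    rw [show a + b * ((1 - t ^ 2) / (1 + t ^ 2)) = ((a + b) + (a - b) * t ^ 2) / (1 + t ^ 2) by
      field_simp; ring]
    field_simp
  rw [show (fun t : ℝ => |2 * (1 + t ^ 2)⁻¹| • (a + b * Real.cos (2 * arctan t))⁻¹)
      = (fun t : ℝ => 2 * ((a + b) + (a - b) * t ^ 2)⁻¹) from funext hpt]
  set k := Real.sqrt ((a + b) / (a - b)) with hk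
  have hkpos : 0 < k := Real.sqrt_pos.mpr (by positivity)
  have hcomp := MeasureTheory.Measure.integral_comp_mul_left
    (fun t : ℝ => 2 * ((a + b) + (a - b) * t ^ 2)⁻¹) k
  have hk2 : (a - b) * k ^ 2 = a + b := by
    rw [hk, Real.sq_sqrt (by positivity)]
    field_simp
  have heq : (fun x : ℝ => 2 * ((a + b) + (a - b) * (k * x) ^ 2)⁻¹)
      = fun x : ℝ => (2 / (a + b)) * (1 + x ^ 2)⁻¹ := by
    funext x
    have h1 : (0:ℝ) < 1 + x ^ 2 := by positivity
    rw [show (a + b) + (a - b) * (k * x) ^ 2 = (a + b) * (1 + x ^ 2) by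
      rw [mul_pow]; nlinarith [hk2]]
    rw [mul_inv]
    ring
  rw [MeasureTheory.setIntegral_univ]
  have : (∫ x : ℝ, 2 * ((a + b) + (a - b) * (k * x) ^ 2)⁻¹)
      = |k⁻¹| • ∫ t : ℝ, 2 * ((a + b) + (a - b) * t ^ 2)⁻¹ := hcomp
  rw [heq] at this
  rw [MeasureTheory.integral_const_mul, integral_univ_inv_one_add_sq] at this
  have hkinv : |k⁻¹| = k⁻¹ := abs_of_pos (by positivity)
  rw [hkinv, smul_eq_mul] at this
  have hI : (∫ t : ℝ, 2 * ((a + b) + (a - b) * t ^ 2)⁻¹) = k * (2 / (a + b) * π) := by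
    field_simp at this ⊢
    linarith [this]
  rw [hI]
  rw [show a ^ 2 - b ^ 2 = (a + b) * (a - b) by ring,
    Real.sqrt_mul (le_of_lt hab2), hk, Real.sqrt_div hab2.le]
  have h1 : 0 < Real.sqrt (a + b) := Real.sqrt_pos.mpr hab2
  have h2 : 0 < Real.sqrt (a - b) := Real.sqrt_pos.mpr hab1
  rw [div_mul_eq_mul_div, eq_div_iff (by positivity)]
  field_simp
  linear_combination Real.sq_sqrt hab2.le


lemma aux_shift (A R φ : ℝ) (h : |R| < A) :
    ∫ x in (0:ℝ)..(2 * π), (A + R * Real.cos (x - φ))⁻¹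
      = 2 * π / Real.sqrt (A ^ 2 - R ^ 2) := by
  have hper : Function.Periodic (fun x : ℝ => (A + R * Real.cos x)⁻¹) (2 * π) := by
    intro x; simp [Real.cos_add_two_pi]
  have h1 := intervalIntegral.integral_comp_sub_right
    (fun x : ℝ => (A + R * Real.cos x)⁻¹) φ (a := 0) (b := 2 * π)
  rw [h1, show (0:ℝ) - φ = -φ by ring, show 2 * π - φ = -φ + 2 * π by ring,
    hper.intervalIntegral_add_eq (-φ) (-π), show -π + 2 * π = π by ring]
  exact aux_W A R h

lemma aux_circ (A B C : ℝ) (hA : 0 < A) (h : B ^ 2 + C ^ 2 < A ^ 2) :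
    ∫ x in (0:ℝ)..(2 * π), (A + B * Real.cos x + C * Real.sin x)⁻¹
      = 2 * π / Real.sqrt (A ^ 2 - B ^ 2 - C ^ 2) := by
  by_cases h0 : B ^ 2 + C ^ 2 = 0
  · have hB : B = 0 := by nlinarith [sq_nonneg B, sq_nonneg C]
    have hC : C = 0 := by nlinarith [sq_nonneg B, sq_nonneg C]
    subst hB; subst hC
    simp only [zero_mul, add_zero, sub_zero]
    rw [intervalIntegral.integral_const, smul_eq_mul,
      show A ^ 2 - 0 ^ 2 - 0 ^ 2 = A ^ 2 by ring, Real.sqrt_sq hA.le]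
    field_simp
    ring
  · set R := Real.sqrt (B ^ 2 + C ^ 2) with hR
    have hRpos : 0 < R := Real.sqrt_pos.mpr (lt_of_le_of_ne (by positivity) (Ne.symm h0))
    have hR2 : R ^ 2 = B ^ 2 + C ^ 2 := Real.sq_sqrt (by positivity)
    set z : ℂ := ⟨B, C⟩ with hz
    have hzne : z ≠ 0 := by
      intro hc
      rw [Complex.ext_iff] at hc
      simp [hz] at hc
      nlinarith [hc.1, hc.2]
    have habs : ‖z‖ = R := by
      rw [Complex.norm_def, Complex.normSq_mk, hR]
      ring_nf
    have hcos : Real.cos (Complex.arg z) = B / R := by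
      rw [Complex.cos_arg hzne, habs]
    have hsin : Real.sin (Complex.arg z) = C / R := by
      rw [Complex.sin_arg, habs]
    have hpt : ∀ x : ℝ, A + B * Real.cos x + C * Real.sin x
        = A + R * Real.cos (x - Complex.arg z) := by
      intro x
      rw [Real.cos_sub, hcos, hsin]
      field_simp
      ring
    simp only [hpt]
    rw [aux_shift A R (Complex.arg z) (by rw [abs_of_pos hRpos]; nlinarith), hR2]
    ring_nf

lemma aux_circAbs_pos (A B C : ℝ) (hA : 0 < A) (h : B ^ 2 + C ^ 2 < A ^ 2) :
    ∫ t in (0:ℝ)..1, |A + B * Real.cos (2 * π * t) + C * Real.sin (2 * π * t)|⁻¹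
      = (Real.sqrt (A ^ 2 - B ^ 2 - C ^ 2))⁻¹ := by
  have key : ∀ u : ℝ, (B * Real.cos u + C * Real.sin u) ^ 2 ≤ B ^ 2 + C ^ 2 := by
    intro u
    nlinarith [Real.sin_sq_add_cos_sq u, sq_nonneg (B * Real.sin u - C * Real.cos u)]
  have hpos : ∀ u : ℝ, 0 < A + B * Real.cos u + C * Real.sin u := by
    intro u
    nlinarith [key u, sq_nonneg (A + (B * Real.cos u + C * Real.sin u))]
  have habs : ∀ t : ℝ, |A + B * Real.cos (2 * π * t) + C * Real.sin (2 * π * t)|⁻¹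
      = (A + B * Real.cos (2 * π * t) + C * Real.sin (2 * π * t))⁻¹ := by
    intro t; rw [abs_of_pos (hpos _)]
  simp only [habs]
  have hc : (2 * π) ≠ 0 := by positivity
  have hsub := intervalIntegral.integral_comp_mul_left
    (fun x : ℝ => (A + B * Real.cos x + C * Real.sin x)⁻¹) hc (a := 0) (b := 1)
  simp only [mul_zero, mul_one] at hsub
  rw [hsub, aux_circ A B C hA h, smul_eq_mul]
  have hs : 0 < Real.sqrt (A ^ 2 - B ^ 2 - C ^ 2) := Real.sqrt_pos.mpr (by nlinarith)
  field_simp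

lemma aux_circAbs (A B C : ℝ) (h : B ^ 2 + C ^ 2 < A ^ 2) :
    ∫ t in (0:ℝ)..1, |A + B * Real.cos (2 * π * t) + C * Real.sin (2 * π * t)|⁻¹
      = (Real.sqrt (A ^ 2 - B ^ 2 - C ^ 2))⁻¹ := by
  rcases lt_trichotomy A 0 with hA | hA | hA
  · have hpt : ∀ t : ℝ, |A + B * Real.cos (2 * π * t) + C * Real.sin (2 * π * t)|
        = |(-A) + (-B) * Real.cos (2 * π * t) + (-C) * Real.sin (2 * π * t)| := by
      intro t; rw [← abs_neg]; ring_nf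
    simp only [hpt]
    rw [aux_circAbs_pos (-A) (-B) (-C) (by linarith) (by nlinarith)]
    ring_nf
  · exfalso; rw [hA] at h; nlinarith [sq_nonneg B, sq_nonneg C]
  · exact aux_circAbs_pos A B C hA h



lemma aux_subst (F f : ℝ → ℝ) (hd : ∀ x, HasDerivAt F (f x) x) (hfc : Continuous f)
    (hfpos : ∀ x, 0 ≤ f x) (hbot : Tendsto F atBot (nhds 0))
    (htop : Tendsto F atTop (nhds 1)) (h : ℝ → ℝ) (hh : Continuous h) :
    ∫ x, h (F x) * f x = ∫ t in (0:ℝ)..1, h t := by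
  have hmono : Monotone F := monotone_of_hasDerivAt_nonneg hd hfpos
  have hF0 : ∀ x, 0 ≤ F x := by
    intro x
    refine le_of_tendsto hbot (eventually_atBot.mpr ⟨x, fun y hy => hmono hy⟩)
  have hF1 : ∀ x, F x ≤ 1 := by
    intro x
    refine ge_of_tendsto htop (eventually_atTop.mpr ⟨x, fun y hy => hmono hy⟩)
  -- integrability of f
  have hfint : Integrable f := by
    refine MeasureTheory.integrable_of_intervalIntegral_norm_bounded
      (a := fun x : ℝ => -x) (b := fun x : ℝ => x) (l := atTop) 1
      (fun i => hfc.integrableOn_Ioc) tendsto_neg_atTop_atBot tendsto_id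
      (Eventually.of_forall fun x => ?_)
    have : ∀ y : ℝ, ‖f y‖ = f y := fun y => Real.norm_of_nonneg (hfpos y)
    simp only [this]
    rw [intervalIntegral.integral_eq_sub_of_hasDerivAt (fun y _ => hd y)
      (hfc.intervalIntegrable _ _)]
    linarith [hF0 (-x), hF1 x]
  -- bound for h on [0,1]
  obtain ⟨t0, -, hM'⟩ := isCompact_Icc.exists_isMaxOn (s := Icc (0:ℝ) 1)
    ⟨0, by norm_num⟩ (hh.abs.continuousOn)
  set M := |h t0|
  have hM : ∀ t ∈ Icc (0:ℝ) 1, |h t| ≤ M := fun t ht => hM' ht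
  have hMnn : 0 ≤ M := abs_nonneg _
  have hFc : Continuous F := by
    rw [continuous_iff_continuousAt]; exact fun x => (hd x).continuousAt
  have hint : Integrable (fun x => h (F x) * f x) := by
    refine Integrable.mono (hfint.const_mul M) ((hh.comp hFc).mul hfc).aestronglyMeasurable
      (Eventually.of_forall fun x => ?_)
    rw [Real.norm_of_nonneg (mul_nonneg hMnn (hfpos x)), norm_mul,
      Real.norm_of_nonneg (hfpos x)]
    exact mul_le_mul_of_nonneg_right (hM (F x) ⟨hF0 x, hF1 x⟩) (hfpos x)
  -- antiderivative
  set H : ℝ → ℝ := fun u => ∫ t in (0:ℝ)..u, h t with hH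
  have hHd : ∀ u, HasDerivAt H (h u) u := by
    intro u
    exact intervalIntegral.integral_hasDerivAt_right (hh.intervalIntegrable _ _)
      (hh.stronglyMeasurableAtFilter _ _) hh.continuousAt
  have hcomp : ∀ x, HasDerivAt (H ∘ F) (h (F x) * f x) x := fun x =>
    (hHd (F x)).comp x (hd x)
  have hHbot : Tendsto (H ∘ F) atBot (nhds (H 0)) :=
    ((hHd 0).continuousAt.tendsto).comp hbot
  have hHtop : Tendsto (H ∘ F) atTop (nhds (H 1)) :=
    ((hHd 1).continuousAt.tendsto).comp htop
  rw [MeasureTheory.integral_of_hasDerivAt_of_tendsto hcomp hint hHbot hHtop]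
  simp [hH]


lemma aux_master (σ τ υ c1 p a : ℝ) (hσ : σ ≠ 0) (hτ : τ ≠ 0) (hυ : υ ≠ 0)
    (hc1 : c1 = σ * τ / υ + σ * υ / τ + τ * υ / σ) (hp : p = c1 - 2 * (τ * υ / σ))
    (hc1σ : 2 * |σ| < c1) (hpσ : 2 * |σ| < |p|)
    (FY fY FZ fZ : ℝ → ℝ)
    (hdY : ∀ x, HasDerivAt FY (fY x) x) (hYc : Continuous fY) (hYpos : ∀ x, 0 ≤ fY x)
    (hYbot : Tendsto FY atBot (nhds 0)) (hYtop : Tendsto FY atTop (nhds 1))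
    (hdZ : ∀ x, HasDerivAt FZ (fZ x) x) (hZc : Continuous fZ) (hZpos : ∀ x, 0 ≤ fZ x)
    (hZbot : Tendsto FZ atBot (nhds 0)) (hZtop : Tendsto FZ atTop (nhds 1)) :
    ∫ y, ∫ z, (c1 + 2 * (σ * Real.cos (a - 2 * π * FY y) + τ * Real.cos (a - 2 * π * FZ z)
        + υ * Real.cos (2 * π * FY y - 2 * π * FZ z)))⁻¹ * (fY y * fZ z)
      = (Real.sqrt (p ^ 2 - 4 * σ ^ 2))⁻¹ := by
  have hp2 : 4 * σ ^ 2 < p ^ 2 := by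
    have h1 := sq_abs p; have h2 := sq_abs σ
    nlinarith [abs_nonneg σ, abs_nonneg p]
  -- the core square identity
  have key : ∀ cc : ℝ, (c1 + 2 * σ * cc) ^ 2 - (4 * τ ^ 2 + 4 * υ ^ 2 + 8 * τ * υ * cc)
      = (p + 2 * σ * cc) ^ 2 := by
    intro cc
    subst hp; subst hc1
    field_simp
    ring
  have hσcos : ∀ u : ℝ, |σ * Real.cos u| ≤ |σ| := by
    intro u
    rw [abs_mul]
    exact mul_le_of_le_one_right (abs_nonneg σ) (Real.abs_cos_le_one u)
  -- inner integral
  have inner : ∀ w : ℝ,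
      (∫ z, (c1 + 2 * (σ * Real.cos (a - w) + τ * Real.cos (a - 2 * π * FZ z)
        + υ * Real.cos (w - 2 * π * FZ z)))⁻¹ * fZ z)
      = |p + 2 * σ * Real.cos (a - w)|⁻¹ := by
    intro w
    set A := c1 + 2 * σ * Real.cos (a - w) with hA
    set B := 2 * (τ * Real.cos a + υ * Real.cos w) with hB
    set C := 2 * (τ * Real.sin a + υ * Real.sin w) with hC
    have hApos : 0 < A := by
      have := abs_le.mp (hσcos (a - w))
      rw [hA]; linarith
    have hBC : B ^ 2 + C ^ 2 = 4 * τ ^ 2 + 4 * υ ^ 2 + 8 * τ * υ * Real.cos (a - w) := by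
      rw [hB, hC, Real.cos_sub]
      linear_combination 4 * τ ^ 2 * (Real.sin_sq_add_cos_sq a)
        + 4 * υ ^ 2 * (Real.sin_sq_add_cos_sq w)
    have hne : p + 2 * σ * Real.cos (a - w) ≠ 0 := by
      intro h0
      have h1 := abs_le.mp (hσcos (a - w))
      have : |p| = |2 * σ * Real.cos (a - w)| := by rw [show p = -(2 * σ * Real.cos (a-w)) by linarith, abs_neg]
      rw [this] at hpσ
      have : |2 * σ * Real.cos (a - w)| ≤ 2 * |σ| := by
        rw [show 2 * σ * Real.cos (a-w) = 2 * (σ * Real.cos (a-w)) by ring, abs_mul, abs_two]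
        nlinarith [abs_nonneg (σ * Real.cos (a-w)), hσcos (a-w)]
      linarith
    have hsq : A ^ 2 - (B ^ 2 + C ^ 2) = (p + 2 * σ * Real.cos (a - w)) ^ 2 := by
      rw [hA, hBC]
      exact key _
    have hABC : B ^ 2 + C ^ 2 < A ^ 2 := by
      have h2 : 0 < (p + 2 * σ * Real.cos (a - w)) ^ 2 := by positivity
      linarith [hsq, h2]
    have hid : ∀ t : ℝ, c1 + 2 * (σ * Real.cos (a - w) + τ * Real.cos (a - 2 * π * t)
        + υ * Real.cos (w - 2 * π * t))
        = A + B * Real.cos (2 * π * t) + C * Real.sin (2 * π * t) := by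
      intro t
      rw [hA, hB, hC, Real.cos_sub, Real.cos_sub, Real.cos_sub]
      ring
    have hDpos : ∀ t : ℝ, 0 < A + B * Real.cos (2 * π * t) + C * Real.sin (2 * π * t) := by
      intro t
      nlinarith [hABC, sq_nonneg (A + (B * Real.cos (2*π*t) + C * Real.sin (2*π*t))),
        Real.sin_sq_add_cos_sq (2*π*t), sq_nonneg (B * Real.sin (2*π*t) - C * Real.cos (2*π*t))]
    have h2pt : Continuous (fun t : ℝ => 2 * π * t) := continuous_const.mul continuous_id
    have hcont : Continuous (fun t : ℝ =>
        (A + B * Real.cos (2 * π * t) + C * Real.sin (2 * π * t))⁻¹) :=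
      Continuous.inv₀
        (((continuous_const.add (continuous_const.mul
          (Real.continuous_cos.comp h2pt))).add (continuous_const.mul
          (Real.continuous_sin.comp h2pt))))
        (fun t => (hDpos t).ne')
    calc (∫ z, (c1 + 2 * (σ * Real.cos (a - w) + τ * Real.cos (a - 2 * π * FZ z)
          + υ * Real.cos (w - 2 * π * FZ z)))⁻¹ * fZ z)
        = ∫ z, (A + B * Real.cos (2 * π * FZ z) + C * Real.sin (2 * π * FZ z))⁻¹ * fZ z := by
          simp only [hid]
      _ = ∫ t in (0:ℝ)..1, (A + B * Real.cos (2 * π * t) + C * Real.sin (2 * π * t))⁻¹ :=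
          aux_subst FZ fZ hdZ hZc hZpos hZbot hZtop _ hcont
      _ = ∫ t in (0:ℝ)..1, |A + B * Real.cos (2 * π * t) + C * Real.sin (2 * π * t)|⁻¹ := by
          simp only [fun t : ℝ => abs_of_pos (hDpos t)]
      _ = (Real.sqrt (A ^ 2 - B ^ 2 - C ^ 2))⁻¹ := aux_circAbs A B C hABC
      _ = |p + 2 * σ * Real.cos (a - w)|⁻¹ := by
          rw [show A ^ 2 - B ^ 2 - C ^ 2 = (p + 2 * σ * Real.cos (a - w)) ^ 2 by
            linarith [hsq], Real.sqrt_sq_eq_abs]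
  -- outer integral
  have houter : ∀ y, (∫ z, (c1 + 2 * (σ * Real.cos (a - 2 * π * FY y)
      + τ * Real.cos (a - 2 * π * FZ z)
      + υ * Real.cos (2 * π * FY y - 2 * π * FZ z)))⁻¹ * (fY y * fZ z))
      = |p + 2 * σ * Real.cos a * Real.cos (2 * π * FY y)
          + 2 * σ * Real.sin a * Real.sin (2 * π * FY y)|⁻¹ * fY y := by
    intro y
    have hpull : ∀ z, (c1 + 2 * (σ * Real.cos (a - 2 * π * FY y)
        + τ * Real.cos (a - 2 * π * FZ z)
        + υ * Real.cos (2 * π * FY y - 2 * π * FZ z)))⁻¹ * (fY y * fZ z)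
        = fY y * ((c1 + 2 * (σ * Real.cos (a - 2 * π * FY y)
        + τ * Real.cos (a - 2 * π * FZ z)
        + υ * Real.cos (2 * π * FY y - 2 * π * FZ z)))⁻¹ * fZ z) := by
      intro z; ring
    simp only [hpull]
    rw [MeasureTheory.integral_const_mul, inner (2 * π * FY y)]
    rw [show p + 2 * σ * Real.cos (a - 2 * π * FY y)
      = p + 2 * σ * Real.cos a * Real.cos (2 * π * FY y)
        + 2 * σ * Real.sin a * Real.sin (2 * π * FY y) by rw [Real.cos_sub]; ring]
    ring
  simp only [houter]
  have hne2 : ∀ t : ℝ, p + 2 * σ * Real.cos a * Real.cos (2 * π * t)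
      + 2 * σ * Real.sin a * Real.sin (2 * π * t) ≠ 0 := by
    intro t h0
    have htrig : (Real.cos a * Real.cos (2*π*t) + Real.sin a * Real.sin (2*π*t)) ^ 2 ≤ 1 := by
      nlinarith [Real.sin_sq_add_cos_sq a, Real.sin_sq_add_cos_sq (2*π*t),
        sq_nonneg (Real.cos a * Real.sin (2*π*t) - Real.sin a * Real.cos (2*π*t))]
    have hkey : (2 * σ * Real.cos a * Real.cos (2*π*t) + 2 * σ * Real.sin a * Real.sin (2*π*t)) ^ 2
        ≤ 4 * σ ^ 2 := by
      nlinarith [htrig, sq_nonneg σ]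
    have hpp : p = -(2 * σ * Real.cos a * Real.cos (2*π*t)
        + 2 * σ * Real.sin a * Real.sin (2*π*t)) := by linarith
    have : p ^ 2 ≤ 4 * σ ^ 2 := by rw [hpp, neg_sq]; exact hkey
    linarith
  have h2pt : Continuous (fun t : ℝ => 2 * π * t) := continuous_const.mul continuous_id
  have hcont2 : Continuous (fun t : ℝ => |p + 2 * σ * Real.cos a * Real.cos (2 * π * t)
      + 2 * σ * Real.sin a * Real.sin (2 * π * t)|⁻¹) :=
    Continuous.inv₀
      (((continuous_const.add (continuous_const.mul
        (Real.continuous_cos.comp h2pt))).add (continuous_const.mul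
        (Real.continuous_sin.comp h2pt))).abs)
      (fun t => abs_ne_zero.mpr (hne2 t))
  calc (∫ y, |p + 2 * σ * Real.cos a * Real.cos (2 * π * FY y)
        + 2 * σ * Real.sin a * Real.sin (2 * π * FY y)|⁻¹ * fY y)
      = ∫ t in (0:ℝ)..1, |p + 2 * σ * Real.cos a * Real.cos (2 * π * t)
        + 2 * σ * Real.sin a * Real.sin (2 * π * t)|⁻¹ :=
        aux_subst FY fY hdY hYc hYpos hYbot hYtop _ hcont2
    _ = (Real.sqrt (p ^ 2 - (2 * σ * Real.cos a) ^ 2 - (2 * σ * Real.sin a) ^ 2))⁻¹ :=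
        aux_circAbs p (2 * σ * Real.cos a) (2 * σ * Real.sin a) (by
          nlinarith [Real.sin_sq_add_cos_sq a, hp2])
    _ = (Real.sqrt (p ^ 2 - 4 * σ ^ 2))⁻¹ := by
        congr 2
        linear_combination (-(4 * σ ^ 2)) * Real.sin_sq_add_cos_sq a


set_option maxHeartbeats 2000000 in
theorem twcm_univariate_marginals
    (ρ12 ρ13 ρ23 : ℝ)
    (h12 : ρ12 ≠ 0) (h13 : ρ13 ≠ 0) (h23 : ρ23 ≠ 0)
    (hprod : ρ12 * ρ13 * ρ23 > 0)
    (hperm : |ρ23| < |ρ12 * ρ13| / (|ρ12| + |ρ13|) ∨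
             |ρ13| < |ρ12 * ρ23| / (|ρ12| + |ρ23|) ∨
             |ρ12| < |ρ13 * ρ23| / (|ρ13| + |ρ23|))
    (c1 c2 : ℝ)
    (hc1 : c1 = ρ12 * ρ13 / ρ23 + ρ12 * ρ23 / ρ13 + ρ13 * ρ23 / ρ12)
    (hc2 : c2 = (1 / (2 * π) ^ 3) *
      Real.sqrt ((ρ12 * ρ13 / ρ23) ^ 2 + (ρ12 * ρ23 / ρ13) ^ 2 + (ρ13 * ρ23 / ρ12) ^ 2
        - 2 * ρ12 ^ 2 - 2 * ρ13 ^ 2 - 2 * ρ23 ^ 2))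
    (F1 F2 F3 f1 f2 f3 : ℝ → ℝ)
    (hf1 : ∀ x, HasDerivAt F1 (f1 x) x) (hf2 : ∀ x, HasDerivAt F2 (f2 x) x)
    (hf3 : ∀ x, HasDerivAt F3 (f3 x) x)
    (hf1c : Continuous f1) (hf2c : Continuous f2) (hf3c : Continuous f3)
    (hf1pos : ∀ x, 0 ≤ f1 x) (hf2pos : ∀ x, 0 ≤ f2 x) (hf3pos : ∀ x, 0 ≤ f3 x)
    (hF1bot : Filter.Tendsto F1 Filter.atBot (nhds 0))
    (hF1top : Filter.Tendsto F1 Filter.atTop (nhds 1))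
    (hF2bot : Filter.Tendsto F2 Filter.atBot (nhds 0))
    (hF2top : Filter.Tendsto F2 Filter.atTop (nhds 1))
    (hF3bot : Filter.Tendsto F3 Filter.atBot (nhds 0))
    (hF3top : Filter.Tendsto F3 Filter.atTop (nhds 1))
    (g : ℝ → ℝ → ℝ → ℝ)
    (hg : ∀ θ1 θ2 θ3, g θ1 θ2 θ3 = (2 * π) ^ 3 * c2 *
      (c1 + 2 * (ρ12 * cos (2 * π * (F1 θ1 - F2 θ2)) +
        ρ13 * cos (2 * π * (F1 θ1 - F3 θ3)) +
        ρ23 * cos (2 * π * (F2 θ2 - F3 θ3))))⁻¹ *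
      (f1 θ1 * f2 θ2 * f3 θ3)) :
    (∀ θ1, (∫ θ2, ∫ θ3, g θ1 θ2 θ3) = f1 θ1) ∧
    (∀ θ2, (∫ θ1, ∫ θ3, g θ1 θ2 θ3) = f2 θ2) ∧
    (∀ θ3, (∫ θ1, ∫ θ2, g θ1 θ2 θ3) = f3 θ3) := by
  -- positivity of the three auxiliary quantities
  have hαpos : 0 < ρ12 * ρ13 / ρ23 := by
    rw [show ρ12 * ρ13 / ρ23 = ρ12 * ρ13 * ρ23 / ρ23 ^ 2 by field_simp]
    exact div_pos hprod (by positivity)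
  have hβpos : 0 < ρ12 * ρ23 / ρ13 := by
    rw [show ρ12 * ρ23 / ρ13 = ρ12 * ρ13 * ρ23 / ρ13 ^ 2 by field_simp]
    exact div_pos hprod (by positivity)
  have hδpos : 0 < ρ13 * ρ23 / ρ12 := by
    rw [show ρ13 * ρ23 / ρ12 = ρ12 * ρ13 * ρ23 / ρ12 ^ 2 by field_simp]
    exact div_pos hprod (by positivity)
  set x := Real.sqrt (ρ12 * ρ13 / ρ23) with hxdef
  set y := Real.sqrt (ρ12 * ρ23 / ρ13) with hydef
  set z := Real.sqrt (ρ13 * ρ23 / ρ12) with hzdef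
  have hxpos : 0 < x := Real.sqrt_pos.mpr hαpos
  have hypos : 0 < y := Real.sqrt_pos.mpr hβpos
  have hzpos : 0 < z := Real.sqrt_pos.mpr hδpos
  have hx : x ^ 2 = ρ12 * ρ13 / ρ23 := Real.sq_sqrt hαpos.le
  have hy : y ^ 2 = ρ12 * ρ23 / ρ13 := Real.sq_sqrt hβpos.le
  have hz : z ^ 2 = ρ13 * ρ23 / ρ12 := Real.sq_sqrt hδpos.le
  have h12sq : ρ12 ^ 2 = x ^ 2 * y ^ 2 := by rw [hx, hy]; field_simp
  have h13sq : ρ13 ^ 2 = x ^ 2 * z ^ 2 := by rw [hx, hz]; field_simp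
  have h23sq : ρ23 ^ 2 = y ^ 2 * z ^ 2 := by rw [hy, hz]; field_simp
  have h12abs : |ρ12| = x * y := by
    rw [← Real.sqrt_sq_eq_abs, h12sq, show x ^ 2 * y ^ 2 = (x * y) ^ 2 by ring,
      Real.sqrt_sq (by positivity)]
  have h13abs : |ρ13| = x * z := by
    rw [← Real.sqrt_sq_eq_abs, h13sq, show x ^ 2 * z ^ 2 = (x * z) ^ 2 by ring,
      Real.sqrt_sq (by positivity)]
  have h23abs : |ρ23| = y * z := by
    rw [← Real.sqrt_sq_eq_abs, h23sq, show y ^ 2 * z ^ 2 = (y * z) ^ 2 by ring,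
      Real.sqrt_sq (by positivity)]
  have hc1xyz : c1 = x ^ 2 + y ^ 2 + z ^ 2 := by rw [hc1, ← hx, ← hy, ← hz]
  -- the triangle-violation condition
  have htri : (y + z < x) ∨ (x + z < y) ∨ (x + y < z) := by
    rcases hperm with h | h | h
    · left
      rw [abs_mul, h12abs, h13abs, h23abs] at h
      have hden : 0 < x * y + x * z := by positivity
      have h' := (lt_div_iff₀ hden).mp h
      nlinarith [mul_pos (mul_pos hxpos hypos) hzpos]
    · right; left
      rw [abs_mul, h12abs, h13abs, h23abs] at h
      have hden : 0 < x * y + y * z := by positivity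
      have h' := (lt_div_iff₀ hden).mp h
      nlinarith [mul_pos (mul_pos hxpos hypos) hzpos]
    · right; right
      rw [abs_mul, h12abs, h13abs, h23abs] at h
      have hden : 0 < x * z + y * z := by positivity
      have h' := (lt_div_iff₀ hden).mp h
      nlinarith [mul_pos (mul_pos hxpos hypos) hzpos]
  have habs1 : 2 * (x * y) < |x ^ 2 + y ^ 2 - z ^ 2| := by
    rcases htri with h | h | h
    · have h' : 2 * (x * y) < x ^ 2 + y ^ 2 - z ^ 2 := by
        nlinarith [mul_pos (show 0 < x - y - z by linarith) (show 0 < x - y + z by linarith)]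
      exact lt_of_lt_of_le h' (le_abs_self _)
    · have h' : 2 * (x * y) < x ^ 2 + y ^ 2 - z ^ 2 := by
        nlinarith [mul_pos (show 0 < y - x - z by linarith) (show 0 < y - x + z by linarith)]
      exact lt_of_lt_of_le h' (le_abs_self _)
    · have h' : x ^ 2 + y ^ 2 - z ^ 2 < -(2 * (x * y)) := by
        nlinarith [mul_pos (show 0 < z - x - y by linarith) (show 0 < z + x + y by positivity)]
      have h'' := neg_abs_le (x ^ 2 + y ^ 2 - z ^ 2)
      linarith
  have habs2 : 2 * (x * z) < |x ^ 2 + z ^ 2 - y ^ 2| := by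
    rcases htri with h | h | h
    · have h' : 2 * (x * z) < x ^ 2 + z ^ 2 - y ^ 2 := by
        nlinarith [mul_pos (show 0 < x - z - y by linarith) (show 0 < x - z + y by linarith)]
      exact lt_of_lt_of_le h' (le_abs_self _)
    · have h' : x ^ 2 + z ^ 2 - y ^ 2 < -(2 * (x * z)) := by
        nlinarith [mul_pos (show 0 < y - x - z by linarith) (show 0 < y + x + z by positivity)]
      have h'' := neg_abs_le (x ^ 2 + z ^ 2 - y ^ 2)
      linarith
    · have h' : 2 * (x * z) < x ^ 2 + z ^ 2 - y ^ 2 := by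
        nlinarith [mul_pos (show 0 < z - x - y by linarith) (show 0 < z - x + y by linarith)]
      exact lt_of_lt_of_le h' (le_abs_self _)
  -- positivity of sqrt argument for the final cancellation
  have hW1 : 0 < (x ^ 2 + y ^ 2 - z ^ 2) ^ 2 - 4 * ρ12 ^ 2 := by
    rw [h12sq]
    nlinarith [habs1, abs_nonneg (x ^ 2 + y ^ 2 - z ^ 2), sq_abs (x ^ 2 + y ^ 2 - z ^ 2),
      mul_pos hxpos hypos]
  have hW2 : 0 < (x ^ 2 + z ^ 2 - y ^ 2) ^ 2 - 4 * ρ13 ^ 2 := by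
    rw [h13sq]
    nlinarith [habs2, abs_nonneg (x ^ 2 + z ^ 2 - y ^ 2), sq_abs (x ^ 2 + z ^ 2 - y ^ 2),
      mul_pos hxpos hzpos]
  refine ⟨?_, ?_, ?_⟩
  · -- first marginal
    intro θ1
    set a := 2 * π * F1 θ1 with ha
    have hrw : ∀ θ2 θ3, g θ1 θ2 θ3 = (2 * π) ^ 3 * c2 * f1 θ1 *
        ((c1 + 2 * (ρ12 * Real.cos (a - 2 * π * F2 θ2) + ρ13 * Real.cos (a - 2 * π * F3 θ3)
          + ρ23 * Real.cos (2 * π * F2 θ2 - 2 * π * F3 θ3)))⁻¹ * (f2 θ2 * f3 θ3)) := by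
      intro θ2 θ3
      rw [hg, show 2 * π * (F1 θ1 - F2 θ2) = a - 2 * π * F2 θ2 by rw [ha]; ring,
        show 2 * π * (F1 θ1 - F3 θ3) = a - 2 * π * F3 θ3 by rw [ha]; ring,
        show 2 * π * (F2 θ2 - F3 θ3) = 2 * π * F2 θ2 - 2 * π * F3 θ3 by ring]
      ring
    simp only [hrw, MeasureTheory.integral_const_mul]
    rw [aux_master ρ12 ρ13 ρ23 c1 (x ^ 2 + y ^ 2 - z ^ 2) a h12 h13 h23 hc1
      (by rw [hc1xyz, ← hz]; ring)
      (by rw [h12abs, hc1xyz]; nlinarith [sq_nonneg (x - y), hzpos])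
      (by rw [h12abs]; exact habs1)
      F2 f2 F3 f3 hf2 hf2c hf2pos hF2bot hF2top hf3 hf3c hf3pos hF3bot hF3top]
    rw [hc2, show (ρ12 * ρ13 / ρ23) ^ 2 + (ρ12 * ρ23 / ρ13) ^ 2 + (ρ13 * ρ23 / ρ12) ^ 2
        - 2 * ρ12 ^ 2 - 2 * ρ13 ^ 2 - 2 * ρ23 ^ 2
        = (x ^ 2 + y ^ 2 - z ^ 2) ^ 2 - 4 * ρ12 ^ 2 by
      rw [← hx, ← hy, ← hz, h12sq, h13sq, h23sq]; ring]
    have hs : 0 < Real.sqrt ((x ^ 2 + y ^ 2 - z ^ 2) ^ 2 - 4 * ρ12 ^ 2) :=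
      Real.sqrt_pos.mpr hW1
    field_simp
  · -- second marginal
    intro θ2
    set a := 2 * π * F2 θ2 with ha
    have hrw : ∀ θ1 θ3, g θ1 θ2 θ3 = (2 * π) ^ 3 * c2 * f2 θ2 *
        ((c1 + 2 * (ρ12 * Real.cos (a - 2 * π * F1 θ1) + ρ23 * Real.cos (a - 2 * π * F3 θ3)
          + ρ13 * Real.cos (2 * π * F1 θ1 - 2 * π * F3 θ3)))⁻¹ * (f1 θ1 * f3 θ3)) := by
      intro θ1 θ3
      rw [hg, show 2 * π * (F1 θ1 - F2 θ2) = -(a - 2 * π * F1 θ1) by rw [ha]; ring,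
        Real.cos_neg,
        show 2 * π * (F1 θ1 - F3 θ3) = 2 * π * F1 θ1 - 2 * π * F3 θ3 by ring,
        show 2 * π * (F2 θ2 - F3 θ3) = a - 2 * π * F3 θ3 by rw [ha]; ring]
      ring
    simp only [hrw, MeasureTheory.integral_const_mul]
    rw [aux_master ρ12 ρ23 ρ13 c1 (x ^ 2 + y ^ 2 - z ^ 2) a h12 h23 h13
      (by rw [hc1]; ring)
      (by rw [hc1xyz, show ρ23 * ρ13 / ρ12 = z ^ 2 by rw [hz]; ring]; ring)
      (by rw [h12abs, hc1xyz]; nlinarith [sq_nonneg (x - y), hzpos])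
      (by rw [h12abs]; exact habs1)
      F1 f1 F3 f3 hf1 hf1c hf1pos hF1bot hF1top hf3 hf3c hf3pos hF3bot hF3top]
    rw [hc2, show (ρ12 * ρ13 / ρ23) ^ 2 + (ρ12 * ρ23 / ρ13) ^ 2 + (ρ13 * ρ23 / ρ12) ^ 2
        - 2 * ρ12 ^ 2 - 2 * ρ13 ^ 2 - 2 * ρ23 ^ 2
        = (x ^ 2 + y ^ 2 - z ^ 2) ^ 2 - 4 * ρ12 ^ 2 by
      rw [← hx, ← hy, ← hz, h12sq, h13sq, h23sq]; ring]
    have hs : 0 < Real.sqrt ((x ^ 2 + y ^ 2 - z ^ 2) ^ 2 - 4 * ρ12 ^ 2) :=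
      Real.sqrt_pos.mpr hW1
    field_simp
  · -- third marginal
    intro θ3
    set a := 2 * π * F3 θ3 with ha
    have hrw : ∀ θ1 θ2, g θ1 θ2 θ3 = (2 * π) ^ 3 * c2 * f3 θ3 *
        ((c1 + 2 * (ρ13 * Real.cos (a - 2 * π * F1 θ1) + ρ23 * Real.cos (a - 2 * π * F2 θ2)
          + ρ12 * Real.cos (2 * π * F1 θ1 - 2 * π * F2 θ2)))⁻¹ * (f1 θ1 * f2 θ2)) := by
      intro θ1 θ2
      rw [hg, show 2 * π * (F1 θ1 - F2 θ2) = 2 * π * F1 θ1 - 2 * π * F2 θ2 by ring,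
        show 2 * π * (F1 θ1 - F3 θ3) = -(a - 2 * π * F1 θ1) by rw [ha]; ring,
        Real.cos_neg,
        show 2 * π * (F2 θ2 - F3 θ3) = -(a - 2 * π * F2 θ2) by rw [ha]; ring]
      rw [Real.cos_neg]
      ring
    simp only [hrw, MeasureTheory.integral_const_mul]
    rw [aux_master ρ13 ρ23 ρ12 c1 (x ^ 2 + z ^ 2 - y ^ 2) a h13 h23 h12
      (by rw [hc1]; ring)
      (by rw [hc1xyz, show ρ23 * ρ12 / ρ13 = y ^ 2 by rw [hy]; ring]; ring)
      (by rw [h13abs, hc1xyz]; nlinarith [sq_nonneg (x - z), hypos])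
      (by rw [h13abs]; exact habs2)
      F1 f1 F2 f2 hf1 hf1c hf1pos hF1bot hF1top hf2 hf2c hf2pos hF2bot hF2top]
    rw [hc2, show (ρ12 * ρ13 / ρ23) ^ 2 + (ρ12 * ρ23 / ρ13) ^ 2 + (ρ13 * ρ23 / ρ12) ^ 2
        - 2 * ρ12 ^ 2 - 2 * ρ13 ^ 2 - 2 * ρ23 ^ 2
        = (x ^ 2 + z ^ 2 - y ^ 2) ^ 2 - 4 * ρ13 ^ 2 by
      rw [← hx, ← hy, ← hz, h12sq, h13sq, h23sq]; ring]
    have hs : 0 < Real.sqrt ((x ^ 2 + z ^ 2 - y ^ 2) ^ 2 - 4 * ρ13 ^ 2) :=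
      Real.sqrt_pos.mpr hW2
    field_simp
end

section
/- For φ = −ρ_{jk}(ρ_{ik}⁻¹e^{iuⱼ} + ρ_{ij}⁻¹e^{iu_k}) ∈ ℂ, with η = arg(φ) and δ = |φ|, the density t_{1|2}(uᵢ|uⱼ,u_k) = (1/(2π))·|1−δ²|/(1+δ²−2δcos(uᵢ−η)) is a wrapped Cauchy density in uᵢ; in particular, if δ ≠ 1through then ∫₀^{2π} t_{1|2}(uᵢ|uⱼ,u_k) duᵢ = 1. -/
open Real Complex

lemma wc_denom_pos {d : ℝ} (hd0 : 0 ≤ d) (hd1 : d < 1) (θ : ℝ) :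
    0 < 1 + d ^ 2 - 2 * d * Real.cos θ := by
  nlinarith [Real.neg_one_le_cos θ, Real.cos_le_one θ, sq_nonneg (1 - d)]

lemma wc_sub_pos {d : ℝ} (hd0 : 0 ≤ d) (hd1 : d < 1) (θ : ℝ) :
    0 < 1 - d * Real.cos θ := by
  nlinarith [Real.neg_one_le_cos θ, Real.cos_le_one θ]

lemma wc_hasDerivAt {d : ℝ} (hd0 : 0 ≤ d) (hd1 : d < 1) (η : ℝ) (u : ℝ) :
    HasDerivAt (fun u : ℝ => u + 2 * Real.arctan
      (d * Real.sin (u - η) / (1 - d * Real.cos (u - η))))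
      ((1 - d ^ 2) / (1 + d ^ 2 - 2 * d * Real.cos (u - η))) u := by
  have hsub : 0 < 1 - d * Real.cos (u - η) := wc_sub_pos hd0 hd1 _
  have hD : 0 < 1 + d ^ 2 - 2 * d * Real.cos (u - η) := wc_denom_pos hd0 hd1 _
  have h1 : HasDerivAt (fun u : ℝ => u - η) 1 u := by
    simpa using (hasDerivAt_id u).sub_const η
  have hs : HasDerivAt (fun u : ℝ => d * Real.sin (u - η))
      (d * Real.cos (u - η)) u := by
    simpa using ((Real.hasDerivAt_sin (u - η)).comp u h1).const_mul d
  have hc : HasDerivAt (fun u : ℝ => 1 - d * Real.cos (u - η))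
      (d * Real.sin (u - η)) u := by
    have := ((Real.hasDerivAt_cos (u - η)).comp u h1).const_mul d
    simpa using (this.const_sub 1)
  have hq : HasDerivAt (fun u : ℝ => d * Real.sin (u - η) / (1 - d * Real.cos (u - η)))
      ((d * Real.cos (u - η) * (1 - d * Real.cos (u - η)) -
        d * Real.sin (u - η) * (d * Real.sin (u - η))) /
        (1 - d * Real.cos (u - η)) ^ 2) u := by
    exact hs.div hc hsub.ne'
  have harctan := (Real.hasDerivAt_arctan
      (d * Real.sin (u - η) / (1 - d * Real.cos (u - η)))).comp u hq
  have hfinal := ((hasDerivAt_id u).add (harctan.const_mul 2))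
  refine HasDerivAt.congr_deriv hfinal ?_; symm
  have hsc : Real.sin (u - η) ^ 2 = 1 - Real.cos (u - η) ^ 2 := by
    have := Real.sin_sq_add_cos_sq (u - η); nlinarith
  have hkey : 1 + (d * Real.sin (u - η) / (1 - d * Real.cos (u - η))) ^ 2
      = (1 + d ^ 2 - 2 * d * Real.cos (u - η)) / (1 - d * Real.cos (u - η)) ^ 2 := by
    rw [div_pow, mul_pow, hsc]
    field_simp
    ring
  rw [hkey,
    show d * Real.sin (u - η) * (d * Real.sin (u - η))
      = d ^ 2 * (1 - Real.cos (u - η) ^ 2) by rw [← hsc]; ring,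
    one_div_div]
  rw [div_eq_iff hD.ne']
  have hD2 : 1 + d ^ 2 - d * 2 * Real.cos (u - η) ≠ 0 := by linarith
  field_simp
  ring

lemma wc_integral_lt {d : ℝ} (hd0 : 0 ≤ d) (hd1 : d < 1) (η : ℝ) :
    ∫ u in (0 : ℝ)..(2 * π),
      (1 - d ^ 2) / (1 + d ^ 2 - 2 * d * Real.cos (u - η)) = 2 * π := by
  have hcont : Continuous fun u : ℝ =>
      (1 - d ^ 2) / (1 + d ^ 2 - 2 * d * Real.cos (u - η)) := by
    apply continuous_const.div
    · fun_prop
    · intro u; exact (wc_denom_pos hd0 hd1 _).ne'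
  have := intervalIntegral.integral_eq_sub_of_hasDerivAt
    (f := fun u : ℝ => u + 2 * Real.arctan
      (d * Real.sin (u - η) / (1 - d * Real.cos (u - η))))
    (fun u _ => wc_hasDerivAt hd0 hd1 η u)
    (hcont.intervalIntegrable 0 (2 * π))
  rw [this]
  have hs : Real.sin (2 * π - η) = Real.sin (0 - η) := by
    rw [Real.sin_sub, Real.sin_sub, Real.sin_two_pi, Real.cos_two_pi]; simp
  have hc : Real.cos (2 * π - η) = Real.cos (0 - η) := by
    rw [Real.cos_sub, Real.cos_sub, Real.sin_two_pi, Real.cos_two_pi]; simp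
  rw [hs, hc]; ring

lemma wc_integral {d : ℝ} (hd0 : 0 ≤ d) (hd1 : d ≠ 1) (η : ℝ) :
    ∫ u in (0 : ℝ)..(2 * π),
      |1 - d ^ 2| / (1 + d ^ 2 - 2 * d * Real.cos (u - η)) = 2 * π := by
  rcases lt_or_gt_of_ne hd1 with h | h
  · have habs : |1 - d ^ 2| = 1 - d ^ 2 := by
      rw [_root_.abs_of_nonneg]; nlinarith
    rw [habs]; exact wc_integral_lt hd0 h η
  · have hd0' : (0 : ℝ) < d := lt_trans one_pos h
    have hinv0 : 0 ≤ d⁻¹ := by positivity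
    have hinv1 : d⁻¹ < 1 := by
      rw [inv_lt_one_iff₀]; right; exact h
    have := wc_integral_lt hinv0 hinv1 η
    refine Eq.trans (intervalIntegral.integral_congr fun u _ => ?_) this
    have habs : |1 - d ^ 2| = d ^ 2 - 1 := by
      rw [_root_.abs_of_nonpos (by nlinarith : 1 - d ^ 2 ≤ 0)]; ring
    rw [habs]
    have hD : 0 < 1 + d ^ 2 - 2 * d * Real.cos (u - η) := by
      nlinarith [Real.neg_one_le_cos (u - η), Real.cos_le_one (u - η), sq_nonneg (1 - d),
        sq_nonneg (1 + d)]
    have hD' : 0 < 1 + d⁻¹ ^ 2 - 2 * d⁻¹ * Real.cos (u - η) :=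
      wc_denom_pos hinv0 hinv1 _
    rw [div_eq_div_iff hD.ne' hD'.ne']
    field_simp
    ring

theorem twcc_univariate_conditional_wrappedCauchy
    (ρij ρik ρjk : ℝ) (hij : ρij ≠ 0) (hik : ρik ≠ 0) (hjk : ρjk ≠ 0)
    (uj uk : ℝ) (huj : uj ∈ Set.Ico 0 (2 * π)) (huk : uk ∈ Set.Ico 0 (2 * π))
    (φ : ℂ)
    (hφ : φ = -(ρjk : ℂ) * ((ρik : ℂ)⁻¹ * Complex.exp (Complex.I * uj) +
      (ρij : ℂ)⁻¹ * Complex.exp (Complex.I * uk)))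
    (η δ : ℝ) (hη : η = φ.arg) (hδ : δ = ‖φ‖) (hδ1 : δ ≠ 1) :
    ∫ u in (0 : ℝ)..(2 * π),
      (1 / (2 * π)) * |1 - δ ^ 2| / (1 + δ ^ 2 - 2 * δ * Real.cos (u - η)) = 1 := by
  have hd0 : 0 ≤ δ := hδ ▸ norm_nonneg φ
  have key := wc_integral hd0 hδ1 η
  have : ∀ u : ℝ, (1 / (2 * π)) * |1 - δ ^ 2| / (1 + δ ^ 2 - 2 * δ * Real.cos (u - η))
      = (1 / (2 * π)) * (|1 - δ ^ 2| / (1 + δ ^ 2 - 2 * δ * Real.cos (u - η))) := by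
    intro u; ring
  simp_rw [this]
  rw [intervalIntegral.integral_const_mul, key]
  have hπ : (2 : ℝ) * π ≠ 0 := by positivity
  field_simp
end

section
/- For ξᵢ, ξⱼ ∈ (-1,1) and ρ_{ij} ∈ (-1,1), the bivariate wrapped Cauchy density of Kato–Pewsey, f(θᵢ,θⱼ) = γ̃·{γ̃₀ − γ̃₁cos(θᵢ−μᵢ) − γ̃₂cos(θⱼ−μⱼ) − γ̃₃cos(θᵢ−μᵢ)cos(θⱼ−μⱼ) − γ̃₄sin(θᵢ−μᵢ)sin(θⱼ−μⱼ)}⁻¹, with γ̃ = (1−ρ_{ij}²)(1−ξᵢ²)(1−ξⱼ²)/(4π²), γ̃₀ = (1+ρ_{ij}²)(1+ξᵢ²)(1+ξⱼ²) − 8ρ_{ij}ξᵢξⱼ, γ̃₁ = 2(1+ρ_{ij}²)ξᵢ(1+ξⱼ²) − 4ρ_{ij}(1+ξᵢ²)ξⱼ, γ̃₂ = 2(1+ρ_{ij}²)(1+ξᵢ²)ξⱼ − 4ρ_{ij}ξᵢ(1+ξⱼ²), γ̃₃ = −4(1+ρ_{ij}²)ξᵢξⱼ + 2ρ_{ij}(1+ξᵢ²)(1+ξⱼ²),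 γ̃₄ = 2ρ_{ij}(1−ξᵢ²)(1−ξⱼ²), has a denominator that is strictly positive for all θᵢ, θⱼ ∈ [0,2π). -/
open Real

set_option maxHeartbeats 1000000 in
theorem katoPewsey_denominator_pos (ξi ξj ρij μi μj : ℝ)
    (hξi : ξi ∈ Set.Ioo (-1 : ℝ) 1) (hξj : ξj ∈ Set.Ioo (-1 : ℝ) 1)
    (hρ : ρij ∈ Set.Ioo (-1 : ℝ) 1)
    (θi θj : ℝ) (hθi : θi ∈ Set.Ico 0 (2 * π)) (hθj : θj ∈ Set.Ico 0 (2 * π)) :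
    0 < ((1 + ρij ^ 2) * (1 + ξi ^ 2) * (1 + ξj ^ 2) - 8 * ρij * ξi * ξj)
        - (2 * (1 + ρij ^ 2) * ξi * (1 + ξj ^ 2) - 4 * ρij * (1 + ξi ^ 2) * ξj) *
            cos (θi - μi)
        - (2 * (1 + ρij ^ 2) * (1 + ξi ^ 2) * ξj - 4 * ρij * ξi * (1 + ξj ^ 2)) *
            cos (θj - μj)
        - (-4 * (1 + ρij ^ 2) * ξi * ξj + 2 * ρij * (1 + ξi ^ 2) * (1 + ξj ^ 2)) *
            cos (θi - μi) * cos (θj - μj)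
        - (2 * ρij * (1 - ξi ^ 2) * (1 - ξj ^ 2)) *
            sin (θi - μi) * sin (θj - μj) := by
  obtain ⟨hi1, hi2⟩ := hξi
  obtain ⟨hj1, hj2⟩ := hξj
  obtain ⟨hr1, hr2⟩ := hρ
  set c1 := cos (θi - μi) with hc1
  set s1 := sin (θi - μi) with hs1
  set c2 := cos (θj - μj) with hc2
  set s2 := sin (θj - μj) with hs2
  have p1 : s1 ^ 2 + c1 ^ 2 = 1 := sin_sq_add_cos_sq _
  have p2 : s2 ^ 2 + c2 ^ 2 = 1 := sin_sq_add_cos_sq _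
  have hac1 : |c1| ≤ 1 := by rw [hc1]; exact abs_cos_le_one _
  have hac2 : |c2| ≤ 1 := by rw [hc2]; exact abs_cos_le_one _
  clear_value c1 s1 c2 s2
  have habsi : |ξi| < 1 := abs_lt.mpr ⟨hi1, hi2⟩
  have habsj : |ξj| < 1 := abs_lt.mpr ⟨hj1, hj2⟩
  have h1 : ξi * c1 ≤ |ξi| := by
    calc ξi * c1 ≤ |ξi * c1| := le_abs_self _
    _ = |ξi| * |c1| := abs_mul _ _
    _ ≤ |ξi| * 1 := mul_le_mul_of_nonneg_left hac1 (abs_nonneg _)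
    _ = |ξi| := mul_one _
  have h2 : ξj * c2 ≤ |ξj| := by
    calc ξj * c2 ≤ |ξj * c2| := le_abs_self _
    _ = |ξj| * |c2| := abs_mul _ _
    _ ≤ |ξj| * 1 := mul_le_mul_of_nonneg_left hac2 (abs_nonneg _)
    _ = |ξj| := mul_one _
  have hh1 : (0:ℝ) < 1 - |ξi| := by linarith
  have hh2 : (0:ℝ) < 1 - |ξj| := by linarith
  have hm1 : 0 < 1 - 2 * ξi * c1 + ξi ^ 2 := by
    nlinarith [mul_pos hh1 hh1, h1, sq_abs ξi]
  have hm2 : 0 < 1 - 2 * ξj * c2 + ξj ^ 2 := by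
    nlinarith [mul_pos hh2 hh2, h2, sq_abs ξj]
  -- key identity: denominator = (1+ρ²)·M2 − 2ρ·R
  have key : ((1 + ρij ^ 2) * (1 + ξi ^ 2) * (1 + ξj ^ 2) - 8 * ρij * ξi * ξj)
        - (2 * (1 + ρij ^ 2) * ξi * (1 + ξj ^ 2) - 4 * ρij * (1 + ξi ^ 2) * ξj) * c1
        - (2 * (1 + ρij ^ 2) * (1 + ξi ^ 2) * ξj - 4 * ρij * ξi * (1 + ξj ^ 2)) * c2
        - (-4 * (1 + ρij ^ 2) * ξi * ξj + 2 * ρij * (1 + ξi ^ 2) * (1 + ξj ^ 2)) * c1 * c2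
        - (2 * ρij * (1 - ξi ^ 2) * (1 - ξj ^ 2)) * s1 * s2
      = (1 + ρij ^ 2) * ((1 - 2 * ξi * c1 + ξi ^ 2) * (1 - 2 * ξj * c2 + ξj ^ 2))
        - 2 * ρij * (((1 - ξi * c1) * (1 - ξj * c2) + ξi * ξj * s1 * s2)
              * ((c1 - ξi) * (c2 - ξj) + s1 * s2)
            + (ξj * s2 * (1 - ξi * c1) - ξi * s1 * (1 - ξj * c2))
              * (s1 * (c2 - ξj) - s2 * (c1 - ξi))) := by
    linear_combination (2 * ξi * ρij * (ξj - c2 + ξj * s2 ^ 2 + ξj * c2 ^ 2 - ξj ^ 2 * c2)) * p1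
      + (2 * ξj * ρij * (2 * ξi - c1 - ξi ^ 2 * c1)) * p2
  -- |X|² = m1·m2 and |Y|² = m1·m2
  have hX : ((1 - ξi * c1) * (1 - ξj * c2) + ξi * ξj * s1 * s2) ^ 2
        + (ξj * s2 * (1 - ξi * c1) - ξi * s1 * (1 - ξj * c2)) ^ 2
      = (1 - 2 * ξi * c1 + ξi ^ 2) * (1 - 2 * ξj * c2 + ξj ^ 2) := by
    linear_combination (ξi ^ 2 * ((1 - ξj * c2) ^ 2 + (ξj * s2) ^ 2)) * p1
      + ((1 - 2 * ξi * c1 + ξi ^ 2) * ξj ^ 2) * p2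
  have hY : ((c1 - ξi) * (c2 - ξj) + s1 * s2) ^ 2
        + (s1 * (c2 - ξj) - s2 * (c1 - ξi)) ^ 2
      = (1 - 2 * ξi * c1 + ξi ^ 2) * (1 - 2 * ξj * c2 + ξj ^ 2) := by
    linear_combination (((c2 - ξj) ^ 2 + s2 ^ 2)) * p1 + ((1 - 2 * ξi * c1 + ξi ^ 2)) * p2
  have hRI : (((1 - ξi * c1) * (1 - ξj * c2) + ξi * ξj * s1 * s2)
          * ((c1 - ξi) * (c2 - ξj) + s1 * s2)
        + (ξj * s2 * (1 - ξi * c1) - ξi * s1 * (1 - ξj * c2))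
          * (s1 * (c2 - ξj) - s2 * (c1 - ξi))) ^ 2
      + ((ξj * s2 * (1 - ξi * c1) - ξi * s1 * (1 - ξj * c2))
          * ((c1 - ξi) * (c2 - ξj) + s1 * s2)
        - ((1 - ξi * c1) * (1 - ξj * c2) + ξi * ξj * s1 * s2)
          * (s1 * (c2 - ξj) - s2 * (c1 - ξi))) ^ 2
      = ((1 - 2 * ξi * c1 + ξi ^ 2) * (1 - 2 * ξj * c2 + ξj ^ 2)) ^ 2 := by
    linear_combination (((c1 - ξi) * (c2 - ξj) + s1 * s2) ^ 2
        + (s1 * (c2 - ξj) - s2 * (c1 - ξi)) ^ 2) * hX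
      + ((1 - 2 * ξi * c1 + ξi ^ 2) * (1 - 2 * ξj * c2 + ξj ^ 2)) * hY
  rw [key]
  set M2 := (1 - 2 * ξi * c1 + ξi ^ 2) * (1 - 2 * ξj * c2 + ξj ^ 2) with hM2def
  set R := ((1 - ξi * c1) * (1 - ξj * c2) + ξi * ξj * s1 * s2)
      * ((c1 - ξi) * (c2 - ξj) + s1 * s2)
    + (ξj * s2 * (1 - ξi * c1) - ξi * s1 * (1 - ξj * c2))
      * (s1 * (c2 - ξj) - s2 * (c1 - ξi)) with hRdef
  set I := (ξj * s2 * (1 - ξi * c1) - ξi * s1 * (1 - ξj * c2))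
      * ((c1 - ξi) * (c2 - ξj) + s1 * s2)
    - ((1 - ξi * c1) * (1 - ξj * c2) + ξi * ξj * s1 * s2)
      * (s1 * (c2 - ξj) - s2 * (c1 - ξi)) with hIdef
  have hM2 : 0 < M2 := mul_pos hm1 hm2
  clear_value M2 R I
  clear hM2def hRdef hIdef hX hY key p1 p2 hac1 hac2 h1 h2
  have hRsq : R ^ 2 ≤ M2 ^ 2 := by linarith [sq_nonneg I]
  have hRle : R ≤ M2 := by nlinarith
  have hRge : -M2 ≤ R := by nlinarith
  rcases le_or_gt 0 ρij with h | h
  · nlinarith [mul_pos (mul_pos (by linarith : (0:ℝ) < 1 - ρij) (by linarith : (0:ℝ) < 1 - ρij)) hM2,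
      mul_nonneg h (by linarith : (0:ℝ) ≤ M2 - R)]
  · nlinarith [mul_pos (mul_pos (by linarith : (0:ℝ) < 1 + ρij) (by linarith : (0:ℝ) < 1 + ρij)) hM2,
      mul_nonneg (by linarith : (0:ℝ) ≤ -ρij) (by linarith : (0:ℝ) ≤ M2 + R)]
end
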